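/- arXiv:0811.0075 — 12 statements merged into one kernel-verified Lean document; each statement's English description precedes it below -/
import Mathlib

section
/- Fact 'R-down', first part: for every assignment I of small subsets as above (with no further assumptions), the two versions of the coherence condition (R↓) are equivalent: (a) for all X ⊆ U and all A, B ∈ I(X), A \ B ∈ I(X \ B); (b) for all X ⊆ U, all A ∈ F(X) and all B ∈ I(X), A \ B ∈ F(X \ B). -/
/-- The big subsets of `X` induced by a system `I` of small subsets:
`F(X) := {A ⊆ X : X \ A ∈ I(X)}`. -/
def bigSets {U : Type*} (I : Set U → Set (Set U)) (X : Set U) : Set (Set U) :=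
  {A | A ⊆ X ∧ X \ A ∈ I X}

/-! Both conditions say the same thing once each set is traded for its complement: relative
complement in `X` is a bijection between `I(X)` and `F(X)` on subsets of `X`, and it commutes
with removing `B`, since `(X \ B) \ (A \ B) = (X \ A) \ B`. -/

open Set

section

variable {U : Type*}

theorem sdiff_sdiff_sdiff_right (X A B : Set U) : (X \ B) \ (A \ B) = (X \ A) \ B := by
  rw [sdiff_sdiff, union_sdiff_self, union_comm, ← sdiff_sdiff]

theorem sdiff_mem_bigSets_iff {I : Set U → Set (Set U)} {X A : Set U} (hA : A ⊆ X) :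
    X \ A ∈ bigSets I X ↔ A ∈ I X := by
  simp only [bigSets, mem_ofPred_eq, sdiff_sdiff_cancel_left hA, sdiff_subset, true_and]

end

/-- Fact "R-down", first part: the two versions of the coherence condition (R↓)
are equivalent:
(a) for all `X ⊆ U` and all `A, B ∈ I(X)`, `A \ B ∈ I(X \ B)`;
(b) for all `X ⊆ U`, all `A ∈ F(X)` and all `B ∈ I(X)`, `A \ B ∈ F(X \ B)`. -/
theorem rDown_versions_equiv {U : Type*} (I : Set U → Set (Set U))
    (hI : ∀ X A, A ∈ I X → A ⊆ X) :
    (∀ X A B : Set U, A ∈ I X → B ∈ I X → A \ B ∈ I (X \ B)) ↔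
    (∀ X A B : Set U, A ∈ bigSets I X → B ∈ I X → A \ B ∈ bigSets I (X \ B)) := by
  constructor
  · intro h X A B ⟨hAX, hXA⟩ hB
    refine ⟨sdiff_subset_sdiff_left hAX, ?_⟩
    rw [sdiff_sdiff_sdiff_right]
    exact h X (X \ A) B hXA hB
  · intro h X A B hA hB
    have hAX := hI X A hA
    have hbig := h X (X \ A) B ((sdiff_mem_bigSets_iff hAX).2 hA) hB
    rwa [← sdiff_sdiff_sdiff_right, sdiff_mem_bigSets_iff (sdiff_subset_sdiff_left hAX)] at hbig
end

section
/- Proposition 'Ref-Class-Mu' (1.1): if the small-set system induced by f satisfies (R↑), then f satisfies (μwOR). -/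
/-- `A` is a small subset of `X` (w.r.t. the choice function `f`):
`A ⊆ X` and `A ∩ f(X) = ∅`. -/
def smallOf {U : Type*} (f : Set U → Set U) (A X : Set U) : Prop :=
  A ⊆ X ∧ A ∩ f X = ∅

theorem smallOf_diff_self {U : Type*} (f : Set U → Set U) (X : Set U) :
    smallOf f (X \ f X) X :=
  ⟨Set.sdiff_subset, Set.sdiff_inter_self⟩

/-- (R↑) implies (μPR). -/
theorem inter_subset_of_smallOf_mono {U : Type*} {f : Set U → Set U}
    (hRup : ∀ X Y A : Set U, X ⊆ Y → smallOf f A X → smallOf f A Y) {X Y : Set U}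
    (hXY : X ⊆ Y) : f Y ∩ X ⊆ f X := by
  intro x ⟨hxY, hxX⟩
  by_contra hx
  have hdisj : (X \ f X) ∩ f Y = ∅ := (hRup X Y _ hXY (smallOf_diff_self f X)).2
  exact hdisj.subset ⟨⟨hxX, hx⟩, hxY⟩

/-- Proposition "Ref-Class-Mu" (1.1): if the small-set system induced by `f`
satisfies (R↑), then `f` satisfies (μwOR). -/
theorem refClassMu_1_1 {U : Type*} (f : Set U → Set U) (hf : ∀ X, f X ⊆ X)
    (hRup : ∀ X Y A : Set U, X ⊆ Y → smallOf f A X → smallOf f A Y) :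
    ∀ X Y : Set U, f (X ∪ Y) ⊆ f X ∪ Y := by
  intro X Y x hx
  rcases hf (X ∪ Y) hx with hxX | hxY
  · exact Or.inl (inter_subset_of_smallOf_mono hRup Set.subset_union_left ⟨hx, hxX⟩)
  · exact Or.inr hxY
end

section
/- Proposition 'Ref-Class-Mu' (1.2): if f satisfies (μwOR), then the small-set system induced by f satisfies (R↑). -/
theorem inter_subset_of_muwOR {U : Type*} {f : Set U → Set U}
    (hwOR : ∀ X Y : Set U, f (X ∪ Y) ⊆ f X ∪ Y) {X Y : Set U} (hXY : X ⊆ Y) :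
    f Y ∩ X ⊆ f X := by
  intro a ⟨hfY, haX⟩
  have hf : f (X ∪ (Y \ X)) ⊆ f X ∪ (Y \ X) := hwOR X (Y \ X)
  rw [Set.union_sdiff_cancel hXY] at hf
  exact (hf hfY).resolve_right fun h => h.2 haX

theorem refClassMu_1_2_general {U : Type*} (f : Set U → Set U)
    (hwOR : ∀ X Y : Set U, f (X ∪ Y) ⊆ f X ∪ Y) :
    ∀ X Y A : Set U, X ⊆ Y → smallOf f A X → smallOf f A Y := by
  rintro X Y A hXY ⟨hAX, hAfX⟩
  refine ⟨hAX.trans hXY, Set.subset_empty_iff.1 ?_⟩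
  calc A ∩ f Y ⊆ A ∩ (f Y ∩ X) := fun a ⟨haA, hfY⟩ => ⟨haA, hfY, hAX haA⟩
    _ ⊆ A ∩ f X := Set.inter_subset_inter_right A (inter_subset_of_muwOR hwOR hXY)
    _ = ∅ := hAfX

/-- Proposition "Ref-Class-Mu" (1.2): if `f` satisfies (μwOR), then the
small-set system induced by `f` satisfies (R↑). -/
theorem refClassMu_1_2 {U : Type*} (f : Set U → Set U) (hf : ∀ X, f X ⊆ X)
    (hwOR : ∀ X Y : Set U, f (X ∪ Y) ⊆ f X ∪ Y) :
    ∀ X Y A : Set U, X ⊆ Y → smallOf f A X → smallOf f A Y :=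
  refClassMu_1_2_general f hwOR
end

section
/- Proposition 'Ref-Class-Mu' (2.1): if the small-set system induced by f satisfies (R↑) and (I∪), then f satisfies (μOR). -/
theorem smallOf_singleton_iff {U : Type*} {f : Set U → Set U} {x : U} {X : Set U} :
    smallOf f {x} X ↔ x ∈ X ∧ x ∉ f X := by
  simp [smallOf, Set.singleton_inter_eq_empty]

theorem apply_union_subset_of_inter_subset {U : Type*} {f : Set U → Set U}
    (hf : ∀ X, f X ⊆ X) (hPR : ∀ X Y : Set U, X ⊆ Y → f Y ∩ X ⊆ f X) (X Y : Set U) :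
    f (X ∪ Y) ⊆ f X ∪ f Y :=
  calc f (X ∪ Y) = f (X ∪ Y) ∩ X ∪ f (X ∪ Y) ∩ Y := by
        rw [← Set.inter_union_distrib_left, Set.inter_eq_left.2 (hf _)]
    _ ⊆ f X ∪ f Y :=
        Set.union_subset_union (hPR _ _ Set.subset_union_left) (hPR _ _ Set.subset_union_right)

theorem refClassMu_2_1_general {U : Type*} (f : Set U → Set U) (hf : ∀ X, f X ⊆ X)
    (hRup : ∀ X Y A : Set U, X ⊆ Y → smallOf f A X → smallOf f A Y) :
    ∀ X Y : Set U, f (X ∪ Y) ⊆ f X ∪ f Y :=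
  apply_union_subset_of_inter_subset hf fun _ _ => inter_subset_of_smallOf_mono hRup

/-- Proposition "Ref-Class-Mu" (2.1): if the small-set system induced by `f`
satisfies (R↑) and (I∪), then `f` satisfies (μOR). -/
theorem refClassMu_2_1 {U : Type*} (f : Set U → Set U) (hf : ∀ X, f X ⊆ X)
    (hRup : ∀ X Y A : Set U, X ⊆ Y → smallOf f A X → smallOf f A Y)
    (hIcup : ∀ X A B : Set U, smallOf f A X → smallOf f B X → smallOf f (A ∪ B) X) :
    ∀ X Y : Set U, f (X ∪ Y) ⊆ f X ∪ f Y :=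
  refClassMu_2_1_general f hf hRup
end

section
/- Proposition 'Ref-Class-Mu' (2.2): if f satisfies (μOR), then the small-set system induced by f satisfies (R↑) and (I∪). -/
namespace smallOf

variable {U : Type*} {f : Set U → Set U}

/-- Splitting `Y = X ∪ (Y \ X)`, (μOR) and `f (Y \ X) ⊆ Y \ X` give the property (μPR). -/
theorem apply_inter_subset_of_subset (hf : ∀ X, f X ⊆ X)
    (hOR : ∀ X Y : Set U, f (X ∪ Y) ⊆ f X ∪ f Y) {X Y : Set U} (hXY : X ⊆ Y) :
    f Y ∩ X ⊆ f X := by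
  rintro a ⟨haY, haX⟩
  rw [← Set.union_sdiff_cancel hXY] at haY
  rcases hOR X (Y \ X) haY with ha | ha
  · exact ha
  · exact absurd haX (hf _ ha).2

theorem mono_right (hf : ∀ X, f X ⊆ X) (hOR : ∀ X Y : Set U, f (X ∪ Y) ⊆ f X ∪ f Y)
    {X Y A : Set U} (hXY : X ⊆ Y) (hA : smallOf f A X) : smallOf f A Y := by
  obtain ⟨hAX, hAf⟩ := hA
  refine ⟨hAX.trans hXY, Set.eq_empty_of_subset_empty ?_⟩
  rintro a ⟨haA, haY⟩
  exact hAf.subset ⟨haA, apply_inter_subset_of_subset hf hOR hXY ⟨haY, hAX haA⟩⟩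

theorem union {X A B : Set U} (hA : smallOf f A X) (hB : smallOf f B X) :
    smallOf f (A ∪ B) X :=
  ⟨Set.union_subset hA.1 hB.1, by rw [Set.union_inter_distrib_right, hA.2, hB.2, Set.union_empty]⟩

end smallOf

/-- Proposition "Ref-Class-Mu" (2.2): if `f` satisfies (μOR), then the
small-set system induced by `f` satisfies (R↑) and (I∪). -/
theorem refClassMu_2_2 {U : Type*} (f : Set U → Set U) (hf : ∀ X, f X ⊆ X)
    (hOR : ∀ X Y : Set U, f (X ∪ Y) ⊆ f X ∪ f Y) :
    (∀ X Y A : Set U, X ⊆ Y → smallOf f A X → smallOf f A Y) ∧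
    (∀ X A B : Set U, smallOf f A X → smallOf f B X → smallOf f (A ∪ B) X) :=
  ⟨fun _ _ _ hXY hA => smallOf.mono_right hf hOR hXY hA, fun _ _ _ => smallOf.union⟩
end

section
/- Proposition 'Ref-Class-Mu' (3.1): if the small-set system induced by f satisfies (R↑) and (I∪), then f satisfies (μPR). -/
theorem smallOf_iff_subset_diff {U : Type*} {f : Set U → Set U} {A X : Set U} :
    smallOf f A X ↔ A ⊆ X \ f X := by
  rw [smallOf, Set.subset_sdiff, Set.disjoint_iff_inter_eq_empty]

theorem refClassMu_3_1_general {U : Type*} (f : Set U → Set U)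
    (hRup : ∀ X Y A : Set U, X ⊆ Y → smallOf f A X → smallOf f A Y) :
    ∀ X Y : Set U, X ⊆ Y → f Y ∩ X ⊆ f X := by
  rintro X Y hXY x ⟨hxfY, hxX⟩
  by_contra hxfX
  have hsmallY : smallOf f {x} Y := hRup X Y {x} hXY (smallOf_singleton_iff.2 ⟨hxX, hxfX⟩)
  exact (smallOf_singleton_iff.1 hsmallY).2 hxfY

/-- Proposition "Ref-Class-Mu" (3.1): if the small-set system induced by `f`
satisfies (R↑) and (I∪), then `f` satisfies (μPR). -/
theorem refClassMu_3_1 {U : Type*} (f : Set U → Set U) (hf : ∀ X, f X ⊆ X)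
    (hRup : ∀ X Y A : Set U, X ⊆ Y → smallOf f A X → smallOf f A Y)
    (hIcup : ∀ X A B : Set U, smallOf f A X → smallOf f B X → smallOf f (A ∪ B) X) :
    ∀ X Y : Set U, X ⊆ Y → f Y ∩ X ⊆ f X :=
  refClassMu_3_1_general f hRup
end

section
/- Proposition 'Ref-Class-Mu' (4.1): if the small-set system induced by f satisfies (R∪disj), then f satisfies (μdisjOR). -/
/-- Proposition "Ref-Class-Mu" (4.1): if the small-set system induced by `f`
satisfies (R∪disj), then `f` satisfies (μdisjOR). -/
theorem refClassMu_4_1 {U : Type*} (f : Set U → Set U) (hf : ∀ X, f X ⊆ X)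
    (hRdisj : ∀ A B X Y : Set U, smallOf f A X → smallOf f B Y → X ∩ Y = ∅ →
      smallOf f (A ∪ B) (X ∪ Y)) :
    ∀ X Y : Set U, X ∩ Y = ∅ → f (X ∪ Y) ⊆ f X ∪ f Y := by
  intro X Y hXY x hx
  have hmiss : (X \ f X ∪ Y \ f Y) ∩ f (X ∪ Y) = ∅ :=
    (hRdisj _ _ X Y (smallOf_diff_self f X) (smallOf_diff_self f Y) hXY).2
  have hxXY : x ∈ X ∪ Y := hf _ hx
  by_contra hxf
  have hx_mem : x ∈ X \ f X ∪ Y \ f Y := by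
    rcases hxXY with hxX | hxY
    · exact Or.inl ⟨hxX, fun h => hxf (Or.inl h)⟩
    · exact Or.inr ⟨hxY, fun h => hxf (Or.inr h)⟩
  exact Set.eq_empty_iff_forall_notMem.1 hmiss x ⟨hx_mem, hx⟩
end

section
/- Proposition 'Ref-Class-Mu' (5.1): if the small-set system induced by f satisfies (R↓), then f satisfies (μCM). -/
/-!
Apply (R↓) to the largest small subset `X \ f X` of `X` and to `X \ Y`, which is small because
`f X ⊆ Y`. Since `Y ⊆ X`, the result says that `Y \ f X` is small in `Y`, i.e. `f Y ⊆ f X`.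
-/

theorem smallOf_sdiff_iff {U : Type*} {f : Set U → Set U} {X Y : Set U} (hfX : f X ⊆ X) :
    smallOf f (X \ Y) X ↔ f X ⊆ Y := by
  rw [smallOf, and_iff_right Set.sdiff_subset, ← Set.disjoint_iff_inter_eq_empty,
    Set.disjoint_left]
  exact ⟨fun h x hx => by_contra fun hxY => h ⟨hfX hx, hxY⟩ hx,
    fun h x hx hxf => hx.2 (h hxf)⟩

/-- Proposition "Ref-Class-Mu" (5.1): if the small-set system induced by `f`
satisfies (R↓), then `f` satisfies (μCM). -/
theorem refClassMu_5_1 {U : Type*} (f : Set U → Set U) (hf : ∀ X, f X ⊆ X)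
    (hRdown : ∀ X A B : Set U, smallOf f A X → smallOf f B X →
      smallOf f (A \ B) (X \ B)) :
    ∀ X Y : Set U, f X ⊆ Y → Y ⊆ X → f Y ⊆ f X := by
  intro X Y hfXY hYX
  have hsmall := hRdown X (X \ f X) (X \ Y) ((smallOf_sdiff_iff (hf X)).2 subset_rfl)
    ((smallOf_sdiff_iff (hf X)).2 hfXY)
  rw [sdiff_sdiff_sdiff_cancel_left hYX, Set.sdiff_sdiff_cancel_left hYX] at hsmall
  exact (smallOf_sdiff_iff (hf Y)).1 hsmall
end

section
/- Proposition 'Ref-Class-Mu' (5.2): if f satisfies (μCM), then the small-set system induced by f satisfies (R↓). -/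
namespace smallOf

variable {U : Type*} {f : Set U → Set U} {A A' B X Y : Set U}

theorem iff_disjoint : smallOf f A X ↔ A ⊆ X ∧ Disjoint A (f X) := by
  rw [smallOf, Set.disjoint_iff_inter_eq_empty]

theorem of_subset (h : smallOf f A X) (hA' : A' ⊆ A) (hA'Y : A' ⊆ Y) (hfY : f Y ⊆ f X) :
    smallOf f A' Y :=
  iff_disjoint.mpr ⟨hA'Y, (iff_disjoint.mp h).2.mono hA' hfY⟩

theorem apply_subset_sdiff (hf : f X ⊆ X) (hB : smallOf f B X) : f X ⊆ X \ B :=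
  Set.subset_sdiff.mpr ⟨hf, (iff_disjoint.mp hB).2.symm⟩

end smallOf

/-- Proposition "Ref-Class-Mu" (5.2): if `f` satisfies (μCM), then the
small-set system induced by `f` satisfies (R↓). -/
theorem refClassMu_5_2 {U : Type*} (f : Set U → Set U) (hf : ∀ X, f X ⊆ X)
    (hCM : ∀ X Y : Set U, f X ⊆ Y → Y ⊆ X → f Y ⊆ f X) :
    ∀ X A B : Set U, smallOf f A X → smallOf f B X →
      smallOf f (A \ B) (X \ B) := by
  intro X A B hA hB
  have hfXB : f (X \ B) ⊆ f X := hCM X (X \ B) (hB.apply_subset_sdiff (hf X)) Set.sdiff_subset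
  exact hA.of_subset Set.sdiff_subset (Set.sdiff_subset_sdiff_left hA.1) hfXB
end

section
/- Proposition 'Ref-Class-Mu' (6.2): if f satisfies (μRatM), then the small-set system induced by f satisfies (R↓↓). -/
open Set

section

variable {U : Type*}

theorem inter_diff_ne_empty_of_not_subset {S X B : Set U} (hSX : S ⊆ X) (hSB : ¬ S ⊆ B) :
    (X \ B) ∩ S ≠ ∅ := by
  obtain ⟨x, hxS, hxB⟩ := not_subset.mp hSB
  exact nonempty_iff_ne_empty.mp ⟨x, ⟨hSX hxS, hxB⟩, hxS⟩

theorem smallOf.diff {f : Set U → Set U} {A X B : Set U} (hA : smallOf f A X)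
    (hfB : f (X \ B) ⊆ f X) : smallOf f (A \ B) (X \ B) :=
  ⟨sdiff_subset_sdiff_left hA.1,
    eq_empty_of_subset_empty ((inter_subset_inter sdiff_subset hfB).trans hA.2.subset)⟩

end

/-- Proposition "Ref-Class-Mu" (6.2): if `f` satisfies (μRatM), then the
small-set system induced by `f` satisfies (R↓↓). -/
theorem refClassMu_6_2 {U : Type*} (f : Set U → Set U) (hf : ∀ X, f X ⊆ X)
    (hRatM : ∀ X Y : Set U, X ⊆ Y → X ∩ f Y ≠ ∅ → f X ⊆ f Y ∩ X) :
    ∀ X A B : Set U, smallOf f A X → B ⊆ X → ¬ f X ⊆ B →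
      smallOf f (A \ B) (X \ B) := by
  intro X A B hA _ hfXB
  have hmeets : (X \ B) ∩ f X ≠ ∅ := inter_diff_ne_empty_of_not_subset (hf X) hfXB
  exact hA.diff ((hRatM _ _ sdiff_subset hmeets).trans inter_subset_left)
end

section
/- Fact 5.1(a) (system P is too strong to capture inheritance): suppose small satisfies (I↓), (I∪), (R↑) and (R↓). If b, c, d ⊆ U satisfy small(b \ d, b) (arrow b → d: most b's are d's), small(c ∩ d, c) (arrow c ↛ d: most c's are not d's) and small(c \ b, c) (arrow c → b: most c's are b's), then small(c ∩ b, b); i.e. in the Tweety diagram the system-P rules force the conclusion 'most b's are not c's', although the diagram contains no link from b to c. -/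
/-! Cautious monotony, applied to `c ↛ d` along `c → b`, gives that most `c ∩ b`'s are not `d`'s;
by OR this is small in `b` as well. Combined by AND with `b → d`, it covers `c ∩ b`:
a point of `c ∩ b` either avoids `d` or lies in `c ∩ d ∩ b`. -/

section SmallSets

variable {U : Type*} {small : Set U → Set U → Prop}

theorem small_inter_inter_of_small_diff
    (hIdown : ∀ A' A X : Set U, A' ⊆ A → small A X → small A' X)
    (hRdown : ∀ A B X : Set U, small A X → small B X → small (A \ B) (X \ B))
    {A X Y : Set U} (hA : small A X) (hY : small (X \ Y) X) :
    small (A ∩ Y) (X ∩ Y) := by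
  have h := hRdown _ _ _ hA hY
  rw [Set.sdiff_sdiff_right_self] at h
  refine hIdown _ _ _ ?_ h
  rintro x ⟨hxA, hxY⟩
  exact ⟨hxA, fun hx => hx.2 hxY⟩

theorem small_inter_of_small_diff
    (hIdown : ∀ A' A X : Set U, A' ⊆ A → small A X → small A' X)
    (hIcup : ∀ A B X : Set U, small A X → small B X → small (A ∪ B) X)
    {A D X : Set U} (hD : small (X \ D) X) (hAD : small (A ∩ D ∩ X) X) :
    small (A ∩ X) X := by
  refine hIdown _ _ _ ?_ (hIcup _ _ _ hD hAD)
  rintro x ⟨hxA, hxX⟩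
  by_cases hxD : x ∈ D
  · exact Or.inr ⟨⟨hxA, hxD⟩, hxX⟩
  · exact Or.inl ⟨hxX, hxD⟩

end SmallSets

/-- Fact 5.1(a) (system P is too strong to capture inheritance): suppose `small`
satisfies (I↓), (I∪), (R↑) and (R↓).  If `b, c, d ⊆ U` satisfy
`small (b \ d) b` (arrow `b → d`), `small (c ∩ d) c` (arrow `c ↛ d`) and
`small (c \ b) c` (arrow `c → b`), then `small (c ∩ b) b`; i.e. in the Tweety
diagram the system-P rules force the conclusion "most `b`'s are not `c`'s",
although the diagram contains no link from `b` to `c`. -/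
theorem systemP_too_strong {U : Type*} (small : Set U → Set U → Prop)
    (hIdown : ∀ A' A X : Set U, A' ⊆ A → small A X → small A' X)
    (hIcup : ∀ A B X : Set U, small A X → small B X → small (A ∪ B) X)
    (hRup : ∀ A X Y : Set U, X ⊆ Y → small A X → small A Y)
    (hRdown : ∀ A B X : Set U, small A X → small B X → small (A \ B) (X \ B))
    (b c d : Set U)
    (hbd : small (b \ d) b) (hcd : small (c ∩ d) c) (hcb : small (c \ b) c) :
    small (c ∩ b) b := by
  have hcdb : small (c ∩ d ∩ b) (c ∩ b) :=
    small_inter_inter_of_small_diff hIdown hRdown hcd hcb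
  exact small_inter_of_small_diff hIdown hIcup hbd
    (hRup _ _ _ Set.inter_subset_right hcdb)
end

section
/- Weak filters and (R↓) do not cooperate: if small satisfies (R↓) and the weak-ideal condition (I∪'), then no nonempty X ⊆ U can be written as a union X = A ∪ B ∪ C of three pairwise disjoint sets A, B, C each of which is small in X. -/
/-!
Removing `C` with (R↓) leaves `A` and `B` small in `X \ C = A ∪ B`, which (I∪') forbids unless
`A ∪ B` is empty; but then `X = C` is small in itself, and `C ∪ C = X` contradicts (I∪') again.
-/

namespace Set

variable {U : Type*} {small : Set U → Set U → Prop}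

theorem small_diff_of_disjoint
    (hRdown : ∀ A B X : Set U, small A X → small B X → small (A \ B) (X \ B))
    {A C X : Set U} (hA : small A X) (hC : small C X) (hAC : Disjoint A C) :
    small A (X \ C) := by
  simpa only [hAC.sdiff_eq_left] using hRdown A C X hA hC

theorem not_small_self
    (hIcup' : ∀ A B X : Set U, X ≠ ∅ → small A X → small B X → A ∪ B ≠ X)
    {X : Set U} (hX : X ≠ ∅) : ¬ small X X :=
  fun hXX => hIcup' X X X hX hXX hXX (union_self X)

end Set

/-- Weak filters and (R↓) do not cooperate: if `small` satisfies (R↓) and the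
weak-ideal condition (I∪'), then no nonempty `X ⊆ U` can be written as a union
`X = A ∪ B ∪ C` of three pairwise disjoint sets `A, B, C` each of which is
small in `X`. -/
theorem rDown_weakIdeal_incompatible {U : Type*} (small : Set U → Set U → Prop)
    (hRdown : ∀ A B X : Set U, small A X → small B X → small (A \ B) (X \ B))
    (hIcup' : ∀ A B X : Set U, X ≠ ∅ → small A X → small B X → A ∪ B ≠ X) :
    ∀ X A B C : Set U, X ≠ ∅ →
      A ∩ B = ∅ → A ∩ C = ∅ → B ∩ C = ∅ →
      X = A ∪ B ∪ C →
      small A X → small B X → small C X → False := by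
  intro X A B C hX _ hAC hBC hXeq hA hB hC
  rw [← Set.disjoint_iff_inter_eq_empty] at hAC hBC
  have hXC : X \ C = A ∪ B := by
    rw [hXeq, Set.union_sdiff_right, (hAC.union_left hBC).sdiff_eq_left]
  by_cases hAB : A ∪ B = ∅
  · have hXC' : X = C := by rw [hXeq, hAB, Set.empty_union]
    exact Set.not_small_self hIcup' hX (hXC' ▸ hC)
  · refine hIcup' A B (A ∪ B) hAB ?_ ?_ rfl <;> rw [← hXC]
    · exact Set.small_diff_of_disjoint hRdown hA hC hAC
    · exact Set.small_diff_of_disjoint hRdown hB hC hBC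
end
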